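/- arXiv:1805.12514 — 5 statements merged into one kernel-verified Lean document; each statement's English description precedes it below -/
import Mathlib

section
/- Let ℓ < 0 < u be real numbers and let S = {(z, ẑ) ∈ ℝ² : ẑ ≥ 0, ẑ ≥ z, −u·z + (u−ℓ)·ẑ ≤ −u·ℓ}. Then for all (z, ẑ) ∈ S and all real μ, ν satisfying μ = (u/(u−ℓ))·ν, we have −z·μ + ẑ·ν ≤ max(0, −(u·ℓ/(u−ℓ))·ν) = −ℓ·max(μ, 0). -/
/-!
When `μ = u / (u - ℓ) * ν`, the objective `-z * μ + zhat * ν` is `ν / (u - ℓ)` times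
`-u * z + (u - ℓ) * zhat`, and on the triangle this quantity ranges over `[0, -u * ℓ]`
(the lower end is the two faces `zhat ≥ 0`, `zhat ≥ z`, the upper end is the third face).
A multiple `c * q` of a number `q ∈ [0, M]` is at most `max 0 (c * M)`.
-/

theorem mul_le_max_zero_mul {α : Type*} [Ring α] [LinearOrder α] [IsStrictOrderedRing α]
    {c q M : α} (hq : 0 ≤ q) (hqM : q ≤ M) : c * q ≤ max 0 (c * M) := by
  rcases le_total 0 c with hc | hc
  · exact le_max_of_le_right (mul_le_mul_of_nonneg_left hqM hc)
  · exact le_max_of_le_left (mul_nonpos_of_nonpos_of_nonneg hc hq)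

section ReluTriangle

variable {ℓ u z zhat : ℝ}

theorem relu_triangle_face_nonneg (hℓ : ℓ ≤ 0) (hu : 0 ≤ u) (hz1 : zhat ≥ 0) (hz2 : zhat ≥ z) :
    0 ≤ -u * z + (u - ℓ) * zhat := by
  have : -u * z + (u - ℓ) * zhat = u * (zhat - z) + -ℓ * zhat := by ring
  rw [this]
  have := mul_nonneg hu (sub_nonneg.mpr hz2)
  have := mul_nonneg (neg_nonneg.mpr hℓ) hz1
  linarith

theorem relu_dual_objective_eq (hℓu : ℓ ≠ u) (ν : ℝ) :
    -z * (u / (u - ℓ) * ν) + zhat * ν = ν / (u - ℓ) * (-u * z + (u - ℓ) * zhat) := by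
  have : u - ℓ ≠ 0 := sub_ne_zero.mpr hℓu.symm
  field_simp

theorem max_zero_relu_dual_eq (hℓ : ℓ ≤ 0) (ν : ℝ) :
    max 0 (-(u * ℓ / (u - ℓ)) * ν) = -ℓ * max (u / (u - ℓ) * ν) 0 := by
  rw [mul_max_of_nonneg _ _ (neg_nonneg.mpr hℓ), mul_zero, max_comm]
  ring_nf

end ReluTriangle

theorem relu_relaxation_dual_bound (ℓ u : ℝ) (hℓ : ℓ < 0) (hu : 0 < u)
    (z zhat μ ν : ℝ)
    (hz1 : zhat ≥ 0) (hz2 : zhat ≥ z) (hz3 : -u * z + (u - ℓ) * zhat ≤ -u * ℓ)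
    (hμ : μ = (u / (u - ℓ)) * ν) :
    -z * μ + zhat * ν ≤ max 0 (-(u * ℓ / (u - ℓ)) * ν) ∧
      max 0 (-(u * ℓ / (u - ℓ)) * ν) = -ℓ * max μ 0 := by
  subst hμ
  refine ⟨?_, max_zero_relu_dual_eq hℓ.le ν⟩
  rw [relu_dual_objective_eq (hℓ.trans hu).ne ν,
    show -(u * ℓ / (u - ℓ)) * ν = ν / (u - ℓ) * (-u * ℓ) by ring]
  exact mul_le_max_zero_mul (relu_triangle_face_nonneg hℓ.le hu.le hz1 hz2) hz3
end

section
/- Let u > 1 and ℓ < −1 and let hardtanh(x) = max(−1, min(1, x)). For all z ∈ [ℓ, u], the point (z, hardtanh(z)) satisfies (2/(u+1))·(z+1) − 1 ≤ hardtanh(z) ≤ (2/(1−ℓ))·(z−1) + 1. -/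
/-!
The lower line passes through `(-1, -1)` with slope `2 / (u + 1) ≤ 1` and reaches height `1`
at `u`, so it stays below `-1` to the left of `-1` and below both `z` and `1` on `[-1, u]`.
The upper line is the image of the lower one for `u = -ℓ` under the point reflection
`(z, y) ↦ (-z, -y)`, which preserves the graph of the odd function hardtanh.
-/

def hardtanh (x : ℝ) : ℝ := max (-1) (min 1 x)

theorem hardtanh_neg (x : ℝ) : hardtanh (-x) = -hardtanh x := by
  simp only [hardtanh, max_def, min_def]
  split_ifs <;> linarith

theorem slope_mul_add_one_sub_one_le_hardtanh {a z : ℝ} (ha₀ : 0 ≤ a) (ha₁ : a ≤ 1)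
    (hz : a * (z + 1) ≤ 2) : a * (z + 1) - 1 ≤ hardtanh z := by
  rcases le_total z (-1) with hz₁ | hz₁
  · exact le_max_of_le_left (by nlinarith)
  · exact le_max_of_le_right (le_min (by linarith) (by nlinarith))

theorem chord_le_hardtanh {u z : ℝ} (hu : 1 ≤ u) (hz : z ≤ u) :
    2 / (u + 1) * (z + 1) - 1 ≤ hardtanh z := by
  have hu₀ : 0 < u + 1 := by linarith
  refine slope_mul_add_one_sub_one_le_hardtanh (by positivity)
    ((div_le_one hu₀).2 (by linarith)) ?_
  calc 2 / (u + 1) * (z + 1) ≤ 2 / (u + 1) * (u + 1) := by gcongr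
    _ = 2 := div_mul_cancel₀ 2 hu₀.ne'

theorem hardtanh_parallelogram_bound (ℓ u : ℝ) (hu : 1 < u) (hℓ : ℓ < -1)
    (z : ℝ) (hzl : ℓ ≤ z) (hzu : z ≤ u) :
    (2 / (u + 1)) * (z + 1) - 1 ≤ max (-1) (min 1 z) ∧
      max (-1) (min 1 z) ≤ (2 / (1 - ℓ)) * (z - 1) + 1 := by
  refine ⟨chord_le_hardtanh hu.le hzu, ?_⟩
  have reflected := chord_le_hardtanh (u := -ℓ) (by linarith) (neg_le_neg hzl)
  rw [hardtanh_neg, neg_add_eq_sub] at reflected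
  change hardtanh z ≤ _
  linear_combination reflected
end

section
/- Let u = −ℓ > 1 and hardtanh as above. For any reals μ, ν with μ = (2/(1+u))·ν, and any z ∈ [ℓ, u]: −z·μ + hardtanh(z)·ν ≤ |(1 − 2/(1+u))·ν|. -/
lemma abs_hardtanh_sub_mul_le {c u z : ℝ} (hc₀ : 0 ≤ c) (hc₁ : c ≤ 1)
    (hcu : c * (1 + u) ≤ 2) (hz : |z| ≤ u) : |hardtanh z - c * z| ≤ 1 - c := by
  obtain ⟨hzl, hzu⟩ := abs_le.1 hz
  have hcz : |c * z| ≤ c * u := by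
    rw [abs_mul, abs_of_nonneg hc₀]; exact mul_le_mul_of_nonneg_left hz hc₀
  obtain ⟨hczl, hczu⟩ := abs_le.1 hcz
  rw [abs_le]
  unfold hardtanh
  rcases le_total z (-1) with hneg | hneg
  · rw [min_eq_right (by linarith), max_eq_left hneg]
    constructor <;> nlinarith
  rcases le_total z 1 with hpos | hpos
  · rw [min_eq_right hpos, max_eq_right hneg]
    constructor <;> nlinarith
  · rw [min_eq_left hpos, max_eq_right (by norm_num)]
    constructor <;> nlinarith

lemma mul_le_abs_mul_of_abs_le {a b ν : ℝ} (h : |a| ≤ b) : ν * a ≤ |ν| * b :=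
  calc ν * a ≤ |ν * a| := le_abs_self _
    _ = |ν| * |a| := abs_mul ν a
    _ ≤ |ν| * b := mul_le_mul_of_nonneg_left h (abs_nonneg ν)

theorem hardtanh_symmetric_dual_bound (u : ℝ) (hu : 1 < u) (ℓ : ℝ) (hℓ : ℓ = -u)
    (μ ν : ℝ) (hμ : μ = (2 / (1 + u)) * ν)
    (z : ℝ) (hzl : ℓ ≤ z) (hzu : z ≤ u) :
    -z * μ + (max (-1) (min 1 z)) * ν ≤ |(1 - 2 / (1 + u)) * ν| := by
  have hpos : 0 < 1 + u := by linarith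
  set c := 2 / (1 + u) with hc
  have hc₀ : 0 ≤ c := by positivity
  have hc₁ : c ≤ 1 := (div_le_one hpos).2 (by linarith)
  have hcu : c * (1 + u) = 2 := div_mul_cancel₀ 2 hpos.ne'
  have hz : |z| ≤ u := abs_le.2 ⟨by linarith, hzu⟩
  calc -z * μ + hardtanh z * ν = ν * (hardtanh z - c * z) := by rw [hμ]; ring
    _ ≤ |ν| * (1 - c) :=
      mul_le_abs_mul_of_abs_le (abs_hardtanh_sub_mul_le hc₀ hc₁ hcu.le hz)
    _ = |(1 - c) * ν| := by rw [abs_mul, abs_of_nonneg (sub_nonneg.2 hc₁), mul_comm]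
end

section
/- Let χᵢ(z₁,…,zᵢ) be the indicator function that zᵢ = ∑_{j<i} f_{ij}(z_j) (value 0 if the equality holds, +∞ otherwise), for i = 2,…,k. Then for all z₁,…,z_k and all ν₁,…,ν_k: ∑_{i=2}^k χᵢ(z_{1:i}) ≥ ν_kᵀz_k − ν₁ᵀz₁ − ∑_{i=1}^{k−1} χᵢ*(−νᵢ, ν_{i+1:k}), where χᵢ*(ν_{i:k}) = sup_{zᵢ} [νᵢᵀzᵢ + ∑_{j=i+1}^k ν_jᵀ f_{ji}(zᵢ)]. -/
/-! If some constraint fails, the left side is `⊤`. Otherwise each conjugate `χᵢ*` dominates its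
objective evaluated at the feasible point `zᵢ` (Fenchel–Young). Summing these objectives and
exchanging the double sum `∑ᵢ ∑_{j>i} ν_jᵀ f_{ji}(zᵢ) = ∑_j ν_jᵀ ∑_{i<j} f_{ji}(zᵢ)`, the constraints
turn the second sum into `∑_{j ≠ 0} ν_jᵀ z_j`, and everything cancels except
`ν_{k-1}ᵀ z_{k-1} - ν_0ᵀ z_0`. -/

open Finset Matrix

theorem EReal.coe_finset_sum {ι : Type*} (s : Finset ι) (c : ι → ℝ) :
    ((∑ i ∈ s, c i : ℝ) : EReal) = ∑ i ∈ s, (c i : EReal) :=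
  map_sum (⟨⟨Real.toEReal, EReal.coe_zero⟩, EReal.coe_add⟩ : ℝ →+ EReal) c s

theorem EReal.sum_ite_zero_top {ι : Type*} (s : Finset ι) (p : ι → Prop) [DecidablePred p] :
    ∑ i ∈ s, (if p i then (0 : EReal) else ⊤) = if ∀ i ∈ s, p i then 0 else ⊤ := by
  split_ifs with h
  · exact sum_eq_zero fun i hi => if_pos (h i hi)
  · push Not at h
    obtain ⟨i, hi, hpi⟩ := h
    refine top_le_iff.mp ?_
    calc (⊤ : EReal) = if p i then 0 else ⊤ := (if_neg hpi).symm
      _ ≤ _ := single_le_sum (fun j _ => ite_nonneg le_rfl le_top) hi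

theorem EReal.coe_sum_le_sum_iSup {ι : Type*} {α : ι → Type*} (s : Finset ι)
    (g : ∀ i, α i → ℝ) (x : ∀ i, α i) :
    ((∑ i ∈ s, g i (x i) : ℝ) : EReal) ≤ ∑ i ∈ s, ⨆ y, (g i y : EReal) := by
  rw [EReal.coe_finset_sum]
  exact sum_le_sum fun i _ => le_iSup (fun y => (g i y : EReal)) (x i)

section NetworkConstraints

variable {ι R : Type*} [Fintype ι] [LT ι] [DecidableRel (α := ι) (· < ·)] [CommRing R]
  {m : ι → Type*} [∀ i, Fintype (m i)]
  (f : ∀ i j, (m j → R) → (m i → R)) (z ν : ∀ i, m i → R)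

theorem sum_sum_gt_dotProduct_comm :
    ∑ i, ∑ j ∈ univ.filter (i < ·), ν j ⬝ᵥ f j i (z i) =
      ∑ j, ν j ⬝ᵥ ∑ i ∈ univ.filter (· < j), f j i (z i) := by
  simp_rw [dotProduct_sum]
  exact sum_comm' fun i j => by simp only [mem_filter, mem_univ, true_and, and_true]

variable [DecidableEq ι] {f z}

theorem sum_dotProduct_sum_lt_eq_of_constraints {i₀ : ι} (h₀ : ∀ i, ¬ i < i₀)
    (hz : ∀ j ≠ i₀, z j = ∑ i ∈ univ.filter (· < j), f j i (z i)) :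
    ∑ j, ν j ⬝ᵥ ∑ i ∈ univ.filter (· < j), f j i (z i) = ∑ j, ν j ⬝ᵥ z j - ν i₀ ⬝ᵥ z i₀ := by
  rw [← add_sum_erase _ _ (mem_univ i₀), ← add_sum_erase _ _ (mem_univ i₀),
    filter_false_of_mem fun i _ => h₀ i, sum_empty, dotProduct_zero, zero_add,
    add_sub_cancel_left]
  exact sum_congr rfl fun j hj => by rw [← hz j (ne_of_mem_erase hj)]

theorem sum_erase_dual_objective_eq_of_constraints {i₀ i₁ : ι} (h₀ : ∀ i, ¬ i < i₀)
    (h₁ : ∀ j, ¬ i₁ < j) (hz : ∀ j ≠ i₀, z j = ∑ i ∈ univ.filter (· < j), f j i (z i)) :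
    ∑ i ∈ univ.erase i₁, (-(ν i ⬝ᵥ z i) + ∑ j ∈ univ.filter (i < ·), ν j ⬝ᵥ f j i (z i)) =
      ν i₁ ⬝ᵥ z i₁ - ν i₀ ⬝ᵥ z i₀ := by
  have htotal : ∑ i, (-(ν i ⬝ᵥ z i) + ∑ j ∈ univ.filter (i < ·), ν j ⬝ᵥ f j i (z i)) =
      -(ν i₀ ⬝ᵥ z i₀) := by
    rw [sum_add_distrib, sum_sum_gt_dotProduct_comm, sum_neg_distrib,
      sum_dotProduct_sum_lt_eq_of_constraints ν h₀ hz]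
    ring
  rw [← add_sum_erase _ _ (mem_univ i₁), filter_false_of_mem fun j _ => h₁ j, sum_empty,
    add_zero] at htotal
  linear_combination htotal

end NetworkConstraints

open Finset in
/-- Lemma 1 of the paper: Fenchel-duality lower bound on the joint indicator of the
network constraints `z i = ∑_{j < i} f i j (z j)` (indices `0,…,k-1`; constraints for
`i ≠ 0`). The conjugates `χᵢ*` are `EReal`-valued suprema. -/
theorem joint_indicator_dual_lower_bound (k : ℕ) (hk : 2 ≤ k)
    (n : Fin k → ℕ)
    (f : ∀ i j : Fin k, (Fin (n j) → ℝ) → (Fin (n i) → ℝ))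
    (z ν : ∀ i : Fin k, Fin (n i) → ℝ) :
    (∑ i ∈ univ.filter (fun i : Fin k => i ≠ ⟨0, by omega⟩),
        (if z i = ∑ j ∈ univ.filter (fun j : Fin k => j < i), f i j (z j)
          then (0 : EReal) else ⊤)) ≥
      ((∑ t, ν ⟨k - 1, by omega⟩ t * z ⟨k - 1, by omega⟩ t : ℝ) : EReal) -
        ((∑ t, ν ⟨0, by omega⟩ t * z ⟨0, by omega⟩ t : ℝ) : EReal) -
        ∑ i ∈ univ.filter (fun i : Fin k => (i : ℕ) + 1 < k),
          ⨆ zi : Fin (n i) → ℝ,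
            ((-(∑ t, ν i t * zi t) +
                ∑ j ∈ univ.filter (fun j : Fin k => i < j),
                  ∑ t, ν j t * f j i zi t : ℝ) : EReal) := by
  rw [EReal.sum_ite_zero_top, ge_iff_le]
  split_ifs with hz
  · have h₀ : ∀ i : Fin k, ¬ i < ⟨0, by omega⟩ := fun i => by
      simp only [Fin.lt_def]; omega
    have h₁ : ∀ j : Fin k, ¬ ⟨k - 1, by omega⟩ < j := fun j => by
      simp only [Fin.lt_def]; omega
    have hlast :
        univ.filter (fun i : Fin k => (i : ℕ) + 1 < k) = univ.erase ⟨k - 1, by omega⟩ := by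
      ext i
      simp only [mem_filter, mem_univ, true_and, mem_erase, ne_eq, Fin.ext_iff, and_true]
      have := i.isLt
      omega
    rw [EReal.sub_nonpos, ← EReal.coe_sub, hlast]
    refine (EReal.coe_sum_le_sum_iSup _ _ z).trans_eq' (congrArg _ ?_)
    exact sum_erase_dual_objective_eq_of_constraints ν h₀ h₁
      fun j hj => hz j (mem_filter.mpr ⟨mem_univ j, hj⟩)
  · exact le_top
end

section
/- Let ℓ ≤ −1 and −1 ≤ u ≤ 1, and hardtanh(x) = max(−1, min(1, x)). For all z ∈ [ℓ, u] and reals μ, ν with μ = ((1+u)/(u−ℓ))·ν: −z·μ + hardtanh(z)·ν ≤ max( −((1+u)/(u−ℓ)·ℓ + 1)·ν, μ − ν ). -/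
lemma hardtanh_of_le_neg_one {x : ℝ} (hx : x ≤ -1) : hardtanh x = -1 :=
  max_eq_left ((min_le_right _ _).trans hx)

lemma hardtanh_of_mem_Icc {x : ℝ} (h₁ : -1 ≤ x) (h₂ : x ≤ 1) : hardtanh x = x := by
  rw [hardtanh, min_eq_right h₂, max_eq_right h₁]

def tiltedHardtanh (s z : ℝ) : ℝ := hardtanh z - s * z

lemma sub_one_le_tiltedHardtanh {s z : ℝ} (hs₀ : 0 ≤ s) (hs₁ : s ≤ 1) (hz : z ≤ 1) :
    s - 1 ≤ tiltedHardtanh s z := by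
  rw [tiltedHardtanh]
  rcases le_total z (-1) with hz' | hz'
  · rw [hardtanh_of_le_neg_one hz']
    nlinarith
  · rw [hardtanh_of_mem_Icc hz' hz]
    nlinarith

lemma tiltedHardtanh_le_of_mem_Icc {s ℓ u z : ℝ} (hs₀ : 0 ≤ s) (hs₁ : s ≤ 1)
    (hslope : s * (u - ℓ) = 1 + u) (hu : u ≤ 1) (hzl : ℓ ≤ z) (hzu : z ≤ u) :
    tiltedHardtanh s z ≤ -(s * ℓ + 1) := by
  rw [tiltedHardtanh]
  rcases le_total z (-1) with hz' | hz'
  · rw [hardtanh_of_le_neg_one hz']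
    nlinarith
  · rw [hardtanh_of_mem_Icc hz' (hzu.trans hu)]
    nlinarith

lemma mul_le_max_mul_of_mem_Icc {a b x : ℝ} (ha : a ≤ x) (hb : x ≤ b) (c : ℝ) :
    x * c ≤ max (b * c) (a * c) := by
  rcases le_total 0 c with hc | hc
  · exact (mul_le_mul_of_nonneg_right hb hc).trans (le_max_left _ _)
  · exact (mul_le_mul_of_nonpos_right ha hc).trans (le_max_right _ _)

theorem hardtanh_triangle_dual_bound (ℓ u : ℝ) (hℓ : ℓ ≤ -1) (hu1 : -1 ≤ u) (hu2 : u ≤ 1)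
    (z : ℝ) (hzl : ℓ ≤ z) (hzu : z ≤ u)
    (μ ν : ℝ) (hμ : μ = ((1 + u) / (u - ℓ)) * ν) :
    -z * μ + (max (-1) (min 1 z)) * ν ≤
      max (-(((1 + u) / (u - ℓ)) * ℓ + 1) * ν) (μ - ν) := by
  set s := (1 + u) / (u - ℓ)
  have hs₀ : 0 ≤ s := div_nonneg (by linarith) (by linarith)
  have hs₁ : s ≤ 1 := div_le_one_of_le₀ (by linarith) (by linarith)
  -- if `u = ℓ` then `u = ℓ = -1`, so the junk value `s = 0` still satisfies this
  have hslope : s * (u - ℓ) = 1 + u := div_mul_cancel_of_imp fun h ↦ by linarith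
  have key := mul_le_max_mul_of_mem_Icc (sub_one_le_tiltedHardtanh hs₀ hs₁ (hzu.trans hu2))
    (tiltedHardtanh_le_of_mem_Icc hs₀ hs₁ hslope hu2 hzl hzu) ν
  rw [tiltedHardtanh, hardtanh] at key
  convert key using 2 <;> rw [hμ] <;> ring
end
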